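/- arXiv:2005.11324 — 4 statements merged into one kernel-verified Lean document; each statement's English description precedes it below -/
import Mathlib

section
/- Let $k_1, k_2, k_3 : \mathbb{R}^3 \to \mathbb{R}$ be differentiable functions with $k_1 + k_2 + k_3 = 1$ identically and $\partial_1 k_1 = \partial_2 k_2 = \partial_3 k_3 = 0$ identically. Then there exist functions $f_1, f_2, f_3$ of one real variable such that $k_1(x) = \frac{1}{3} + f_2(x^2) - f_3(x^3)$, $k_2(x) = \frac{1}{3} + f_3(x^3) - f_1(x^1)$, $k_3(x) = \frac{1}{3} + f_1(x^1) - f_2(x^2)$. -/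
/-!
A differentiable function whose partial derivative in the `i`-th coordinate vanishes identically
is constant along every line parallel to the `i`-th axis, so `k₁`, `k₂`, `k₃` depend only on
`(x², x³)`, `(x¹, x³)`, `(x¹, x²)` respectively. The relation
`k₁(b, c) + k₂(a, c) + k₃(a, b) = 1`, evaluated with some of `a, b, c` set to `0`, then
separates each `kᵢ` into a sum of one-variable functions.
-/

open Function

theorem apply_add_smul_eq_of_fderiv_apply_eq_zero {E F : Type*} [NormedAddCommGroup E]
    [NormedSpace ℝ E] [NormedAddCommGroup F] [NormedSpace ℝ F] {f : E → F}
    (hf : Differentiable ℝ f) {v : E} (hv : ∀ x, fderiv ℝ f x v = 0) (x : E) (t : ℝ) :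
    f (x + t • v) = f x := by
  have hderiv : ∀ s : ℝ, HasDerivAt (fun s => f (x + s • v)) 0 s := fun s => by
    simpa [hv, comp_def] using (hf _).hasFDerivAt.comp_hasDerivAt s
      (((hasDerivAt_id s).smul_const v).const_add x)
  simpa using is_const_of_deriv_eq_zero (fun s => (hderiv s).differentiableAt)
    (fun s => (hderiv s).deriv) t 0

theorem apply_update_eq_of_fderiv_single_eq_zero {ι F : Type*} [Fintype ι] [DecidableEq ι]
    [NormedAddCommGroup F] [NormedSpace ℝ F] {f : (ι → ℝ) → F} (hf : Differentiable ℝ f)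
    {i : ι} (hi : ∀ x, fderiv ℝ f x (Pi.single i 1) = 0) (x : ι → ℝ) (s : ℝ) :
    f (update x i s) = f x := by
  have hline : update x i s = x + (s - x i) • Pi.single i 1 := by
    ext j
    rcases eq_or_ne j i with rfl | hj
    · simp
    · simp [hj]
  rw [hline, apply_add_smul_eq_of_fderiv_apply_eq_zero hf hi]

theorem exists_sum_sub_of_add_add_eq_one {A B C : ℝ → ℝ → ℝ}
    (h : ∀ a b c, A b c + B a c + C a b = 1) :
    ∃ f₁ f₂ f₃ : ℝ → ℝ, ∀ a b c,
      A b c = 1 / 3 + f₂ b - f₃ c ∧ B a c = 1 / 3 + f₃ c - f₁ a ∧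
        C a b = 1 / 3 + f₁ a - f₂ b := by
  refine ⟨fun a => 1 / 3 - B a 0, fun b => A b 0 - 1 / 3, fun c => A 0 0 - A 0 c,
    fun a b c => ?_⟩
  have := h a b c
  have := h 0 b c
  have := h a 0 c
  have := h a b 0
  have := h 0 b 0
  have := h 0 0 c
  have := h a 0 0
  have := h 0 0 0
  exact ⟨by linarith, by linarith, by linarith⟩

/-- If differentiable Kasner exponents on `ℝ³` satisfy `k₁ + k₂ + k₃ = 1` and
`∂₁k₁ = ∂₂k₂ = ∂₃k₃ = 0`, then they are given by differences of one-variable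
functions around the value `1/3`. -/
theorem stmt_6 (k₁ k₂ k₃ : (Fin 3 → ℝ) → ℝ)
    (h₁ : Differentiable ℝ k₁) (h₂ : Differentiable ℝ k₂) (h₃ : Differentiable ℝ k₃)
    (hsum : ∀ x, k₁ x + k₂ x + k₃ x = 1)
    (hd₁ : ∀ x, fderiv ℝ k₁ x (Pi.single 0 1) = 0)
    (hd₂ : ∀ x, fderiv ℝ k₂ x (Pi.single 1 1) = 0)
    (hd₃ : ∀ x, fderiv ℝ k₃ x (Pi.single 2 1) = 0) :
    ∃ f₁ f₂ f₃ : ℝ → ℝ, ∀ x : Fin 3 → ℝ,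
      k₁ x = 1 / 3 + f₂ (x 1) - f₃ (x 2) ∧
      k₂ x = 1 / 3 + f₃ (x 2) - f₁ (x 0) ∧
      k₃ x = 1 / 3 + f₁ (x 0) - f₂ (x 1) := by
  have e₁ (x : Fin 3 → ℝ) : k₁ x = k₁ ![0, x 1, x 2] := by
    rw [← apply_update_eq_of_fderiv_single_eq_zero h₁ hd₁ x 0]
    congr 1; ext j; fin_cases j <;> rfl
  have e₂ (x : Fin 3 → ℝ) : k₂ x = k₂ ![x 0, 0, x 2] := by
    rw [← apply_update_eq_of_fderiv_single_eq_zero h₂ hd₂ x 0]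
    congr 1; ext j; fin_cases j <;> rfl
  have e₃ (x : Fin 3 → ℝ) : k₃ x = k₃ ![x 0, x 1, 0] := by
    rw [← apply_update_eq_of_fderiv_single_eq_zero h₃ hd₃ x 0]
    congr 1; ext j; fin_cases j <;> rfl
  obtain ⟨f₁, f₂, f₃, hf⟩ := exists_sum_sub_of_add_add_eq_one
    (A := fun b c => k₁ ![0, b, c]) (B := fun a c => k₂ ![a, 0, c])
    (C := fun a b => k₃ ![a, b, 0]) fun a b c => by
      rw [← hsum ![a, b, c], e₁ ![a, b, c], e₂ ![a, b, c], e₃ ![a, b, c]]; rfl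
  refine ⟨f₁, f₂, f₃, fun x => ?_⟩
  rw [e₁ x, e₂ x, e₃ x]
  exact hf (x 0) (x 1) (x 2)
end

section
/- Fix $\theta \in \mathbb{R}$ and define $\widehat{\theta} = \theta - \frac{2\pi}{3}\lfloor \frac{3\theta}{2\pi} - 1 \rfloor \in [\frac{2\pi}{3}, \frac{4\pi}{3})$ and $\phi_{\min}(\theta) = (\frac{1}{12\pi}(1 - \frac{1}{4\cos^2\widehat{\theta}}))^{1/2}$. For $\phi_0$ with $12\pi\phi_0^2 \le 1$, set $r = \sqrt{1 - 12\pi\phi_0^2}$ and $k_j = \frac{1}{3} + \frac{2}{3} r \cos(\theta + \frac{2\pi j}{3})$ for $j = 0, 1, 2$. Then all three $k_j$ are positive if and only if $|\phi_0| > \phi_{\min}(\theta)$. -/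
/-!
Write `θ = θ̂ + (2π/3) n` with `n = ⌊3θ/(2π) - 1⌋`. Since `cos (θ̂ + (2π/3) m)` depends only on
`m mod 3`, the three angles `θ + 2πj/3` are, up to multiples of `2π`, the angles `θ̂`, `θ̂ ± 2π/3`.
As `θ̂` lies within `π/3` of `π`, the first has cosine `≤ -1/2`, while the other two lie within
`2π/3` of `0` modulo `2π` and have cosine `≥ -1/2`, so `cos θ̂` is the smallest of the three
cosines. Hence all `k_j` are positive iff `1 + 2 r cos θ̂ > 0`, i.e. `r² cos² θ̂ < 1/4`, which after
substituting `r² = 1 - 12πφ₀²` is the bound on `|φ₀|`.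
-/

open Real

theorem sub_mul_floor_div_sub_one_mem_Ico {p : ℝ} (hp : 0 < p) (x : ℝ) :
    x - p * ⌊x / p - 1⌋ ∈ Set.Ico p (2 * p) := by
  have hx : x = p * (x / p) := by field_simp
  have h₁ := Int.floor_le (x / p - 1)
  have h₂ := Int.lt_floor_add_one (x / p - 1)
  constructor <;> nlinarith

theorem cos_le_neg_half_of_abs_sub_pi_le {x : ℝ} (hx : |x - π| ≤ π / 3) : cos x ≤ -(1 / 2) := by
  have h : cos (π / 3) ≤ cos |x - π| :=
    cos_le_cos_of_nonneg_of_le_pi (abs_nonneg _) (by linarith [pi_pos]) hx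
  rwa [cos_abs, cos_sub_pi, cos_pi_div_three, le_neg] at h

theorem neg_half_le_cos_of_abs_le {y : ℝ} (hy : |y| ≤ 2 * π / 3) : -(1 / 2) ≤ cos y := by
  have h : cos (2 * π / 3) ≤ cos |y| :=
    cos_le_cos_of_nonneg_of_le_pi (abs_nonneg _) (by linarith [pi_pos]) hy
  rwa [cos_abs, show 2 * π / 3 = π - π / 3 by ring, cos_pi_sub, cos_pi_div_three] at h

theorem cos_add_two_pi_div_three_mul_emod (x : ℝ) (m : ℤ) :
    cos (x + 2 * π / 3 * m) = cos (x + 2 * π / 3 * (m % 3 : ℤ)) := by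
  have h : x + 2 * π / 3 * m = x + 2 * π / 3 * (m % 3 : ℤ) + (m / 3 : ℤ) * (2 * π) := by
    conv_lhs => rw [← Int.mul_ediv_add_emod m 3]
    push_cast
    ring
  rw [h, cos_add_int_mul_two_pi]

theorem cos_le_cos_add_two_pi_div_three_mul {x : ℝ} (hx : |x - π| ≤ π / 3) (m : ℤ) :
    cos x ≤ cos (x + 2 * π / 3 * m) := by
  have hcos := cos_le_neg_half_of_abs_sub_pi_le hx
  rw [abs_le] at hx
  rw [cos_add_two_pi_div_three_mul_emod]
  rcases (by omega : m % 3 = 0 ∨ m % 3 = 1 ∨ m % 3 = 2) with h | h | h <;> rw [h]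
  · simp
  all_goals
    rw [← cos_sub_two_pi (x + _)]
    refine hcos.trans (neg_half_le_cos_of_abs_le (abs_le.2 ⟨?_, ?_⟩)) <;> push_cast <;> linarith

theorem exists_fin_three_cos_add_eq (θ : ℝ) (n : ℤ) :
    ∃ j : Fin 3, cos (θ + 2 * π * j / 3) = cos (θ - 2 * π / 3 * n) := by
  refine ⟨⟨((-n) % 3).toNat, by omega⟩, ?_⟩
  have h := cos_add_two_pi_div_three_mul_emod (θ - 2 * π / 3 * n) (n + ((-n) % 3).toNat)
  rw [show (n + ((-n) % 3).toNat) % 3 = 0 by omega] at h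
  convert h using 2 <;> push_cast <;> ring

theorem one_third_add_mul_pos_iff {r c : ℝ} (hr : 0 ≤ r) (hc : c ≤ 0) :
    0 < 1 / 3 + 2 / 3 * r * c ↔ r ^ 2 * c ^ 2 < 1 / 4 := by
  calc 0 < 1 / 3 + 2 / 3 * r * c ↔ r * -c < 1 / 2 := by constructor <;> intro h <;> linarith
    _ ↔ (r * -c) ^ 2 < (1 / 2) ^ 2 :=
      (pow_lt_pow_iff_left₀ (mul_nonneg hr (neg_nonneg.2 hc)) (by norm_num) two_ne_zero).symm
    _ ↔ r ^ 2 * c ^ 2 < 1 / 4 := by ring_nf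

theorem sqrt_lt_abs_iff_sub_mul_sq_mul_lt {k c φ : ℝ} (hk : 0 < k) (hc : 1 ≤ 4 * c ^ 2) :
    √(1 / k * (1 - 1 / (4 * c ^ 2))) < |φ| ↔ (1 - k * φ ^ 2) * c ^ 2 < 1 / 4 := by
  have hc₀ : c ≠ 0 := by rintro rfl; norm_num at hc
  have hA : 0 ≤ 1 / k * (1 - 1 / (4 * c ^ 2)) :=
    mul_nonneg (by positivity) (sub_nonneg.2 ((div_le_one (by positivity)).2 hc))
  have hdiff : φ ^ 2 - 1 / k * (1 - 1 / (4 * c ^ 2)) =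
      (1 / 4 - (1 - k * φ ^ 2) * c ^ 2) / (k * c ^ 2) := by
    field_simp
    ring
  rw [← sqrt_sq_eq_abs, sqrt_lt_sqrt_iff hA, ← sub_pos, hdiff,
    div_pos_iff_of_pos_right (by positivity), sub_pos]

/-- Characterization of quiescent Kasner data: all three Kasner exponents
`k_j = 1/3 + (2/3) r cos(θ + 2πj/3)` are positive iff `|φ₀| > φ_min(θ)`,
where `θ̂ = θ - (2π/3)⌊3θ/(2π) - 1⌋ ∈ [2π/3, 4π/3)` and
`φ_min(θ) = ((1/(12π))(1 - 1/(4cos²θ̂)))^{1/2}`. -/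
theorem stmt_13 (θ φ₀ : ℝ) (hφ : 12 * Real.pi * φ₀ ^ 2 ≤ 1) :
    θ - (2 * Real.pi / 3) * (⌊3 * θ / (2 * Real.pi) - 1⌋ : ℝ) ∈
      Set.Ico (2 * Real.pi / 3) (4 * Real.pi / 3) ∧
    ((∀ j : Fin 3,
        0 < 1 / 3 + 2 / 3 * Real.sqrt (1 - 12 * Real.pi * φ₀ ^ 2) *
          Real.cos (θ + 2 * Real.pi * (j : ℝ) / 3)) ↔
      Real.sqrt ((1 / (12 * Real.pi)) *
        (1 - 1 / (4 * Real.cos (θ - (2 * Real.pi / 3) *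
            (⌊3 * θ / (2 * Real.pi) - 1⌋ : ℝ)) ^ 2))) < |φ₀|) := by
  have hmem := sub_mul_floor_div_sub_one_mem_Ico (by positivity : 0 < 2 * π / 3) θ
  rw [show θ / (2 * π / 3) = 3 * θ / (2 * π) by ring, show 2 * (2 * π / 3) = 4 * π / 3 by ring]
    at hmem
  refine ⟨hmem, ?_⟩
  set n := ⌊3 * θ / (2 * π) - 1⌋
  obtain ⟨j₀, hj₀⟩ := exists_fin_three_cos_add_eq θ n
  set c := cos (θ - 2 * π / 3 * n)
  set r := √(1 - 12 * π * φ₀ ^ 2)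
  have hπdist : |θ - 2 * π / 3 * n - π| ≤ π / 3 :=
    abs_le.2 ⟨by linarith [hmem.1], by linarith [hmem.2]⟩
  have hc : c ≤ -(1 / 2) := cos_le_neg_half_of_abs_sub_pi_le hπdist
  have hmin (j : Fin 3) : c ≤ cos (θ + 2 * π * j / 3) := by
    convert cos_le_cos_add_two_pi_div_three_mul hπdist (n + j) using 2
    push_cast
    ring
  have hr : 0 ≤ r := sqrt_nonneg _
  calc (∀ j : Fin 3, 0 < 1 / 3 + 2 / 3 * r * cos (θ + 2 * π * j / 3))
      ↔ 0 < 1 / 3 + 2 / 3 * r * c :=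
        ⟨fun h => hj₀ ▸ h j₀, fun h j => by linarith [mul_le_mul_of_nonneg_left (hmin j) hr]⟩
    _ ↔ r ^ 2 * c ^ 2 < 1 / 4 := one_third_add_mul_pos_iff hr (by linarith)
    _ ↔ (1 - 12 * π * φ₀ ^ 2) * c ^ 2 < 1 / 4 := by rw [sq_sqrt (by linarith)]
    _ ↔ _ := (sqrt_lt_abs_iff_sub_mul_sq_mul_lt (by positivity) (by nlinarith)).symm
end

section
/- Let $a \in \mathbb{R}$, $a \ne 0$, $\epsilon = \pm 1$, and define $T_a : (-\frac{1}{\sqrt{12\pi}}, \frac{1}{\sqrt{12\pi}}) \to \mathbb{R}$ by $T_a(\phi_0) = \phi_0 / \sqrt{1 - 12\pi\phi_0^2}$. Suppose $\Phi_0$ satisfies $T_1(\Phi_0(\phi_0)) = \epsilon a^{-1} T_1(\phi_0)$ for all $\phi_0$. Then $\Phi_0(\phi_0) = \epsilon a^{-1} \phi_0 (1 + 12\pi\phi_0^2(a^{-2} - 1))^{-1/2}$, and this map is a bijection of the open interval $(-\frac{1}{\sqrt{12\pi}}, \frac{1}{\sqrt{12\pi}})$ onto itself. -/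
/-!
`T(y) = y / √(1 - 12π y²)` is a bijection of `I = (-1/√(12π), 1/√(12π))` onto `ℝ`, with inverse
`S(t) = t / √(1 + 12π t²)`. The functional equation says `T ∘ Φ₀ = c • T` on `I` with
`c = ε a⁻¹ ≠ 0`, so `Φ₀ = S ∘ (c • ·) ∘ T` there: a composite of bijections, and evaluating it
gives the closed form, in which only `c² = a⁻²` appears.
-/

open Real Set

noncomputable section

def tDomain (b : ℝ) : Set ℝ := Ioo (-(1 / √b)) (1 / √b)

def tMap (b y : ℝ) : ℝ := y / √(1 - b * y ^ 2)

def tMapInv (b t : ℝ) : ℝ := t / √(1 + b * t ^ 2)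

end

variable {b : ℝ}

lemma mem_tDomain_iff (hb : 0 < b) {y : ℝ} : y ∈ tDomain b ↔ b * y ^ 2 < 1 := by
  have hsq : √b ^ 2 = b := sq_sqrt hb.le
  have hpos : 0 < √b := sqrt_pos.mpr hb
  rw [tDomain, mem_Ioo, ← abs_lt, lt_div_iff₀ hpos, ← sq_lt_one_iff₀ (by positivity), mul_pow,
    hsq, mul_comm, sq_abs]

lemma tMapInv_tMap {y : ℝ} (hy : b * y ^ 2 < 1) : tMapInv b (tMap b y) = y := by
  have hs : 0 < 1 - b * y ^ 2 := by linarith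
  have hden : 1 + b * tMap b y ^ 2 = (1 - b * y ^ 2)⁻¹ := by
    rw [tMap, div_pow, sq_sqrt hs.le]
    field_simp
    ring
  rw [tMapInv, hden, sqrt_inv, tMap, div_inv_eq_mul, div_mul_cancel₀ _ (sqrt_pos.mpr hs).ne']

lemma mul_tMapInv_sq_lt_one (hb : 0 ≤ b) (t : ℝ) : b * tMapInv b t ^ 2 < 1 := by
  have hs : 0 < 1 + b * t ^ 2 := by positivity
  rw [tMapInv, div_pow, sq_sqrt hs.le, mul_div_assoc', div_lt_one hs]
  linarith

lemma tMap_tMapInv (hb : 0 ≤ b) (t : ℝ) : tMap b (tMapInv b t) = t := by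
  have hs : 0 < 1 + b * t ^ 2 := by positivity
  have hden : 1 - b * tMapInv b t ^ 2 = (1 + b * t ^ 2)⁻¹ := by
    rw [tMapInv, div_pow, sq_sqrt hs.le]
    field_simp
    ring
  rw [tMap, hden, sqrt_inv, tMapInv, div_inv_eq_mul, div_mul_cancel₀ _ (sqrt_pos.mpr hs).ne']

lemma invOn_tMapInv_tMap (hb : 0 < b) : InvOn (tMapInv b) (tMap b) (tDomain b) univ :=
  ⟨fun _ hy ↦ tMapInv_tMap ((mem_tDomain_iff hb).mp hy), fun t _ ↦ tMap_tMapInv hb.le t⟩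

lemma mapsTo_tMapInv (hb : 0 < b) : MapsTo (tMapInv b) univ (tDomain b) :=
  fun t _ ↦ (mem_tDomain_iff hb).mpr (mul_tMapInv_sq_lt_one hb.le t)

lemma bijOn_tMapInv (hb : 0 < b) : BijOn (tMapInv b) univ (tDomain b) :=
  (invOn_tMapInv_tMap hb).symm.bijOn (mapsTo_tMapInv hb) (mapsTo_univ _ _)

lemma bijOn_tMap (hb : 0 < b) : BijOn (tMap b) (tDomain b) univ :=
  (invOn_tMapInv_tMap hb).bijOn (mapsTo_univ _ _) (mapsTo_tMapInv hb)

lemma tMapInv_mul_tMap (hb : 0 ≤ b) (c : ℝ) {y : ℝ} (hy : b * y ^ 2 < 1) :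
    tMapInv b (c * tMap b y) = c * y / √(1 + b * y ^ 2 * (c ^ 2 - 1)) := by
  have hs : 0 < 1 - b * y ^ 2 := by linarith
  have hD : 0 ≤ 1 + b * y ^ 2 * (c ^ 2 - 1) := by
    nlinarith [mul_nonneg (mul_nonneg hb (sq_nonneg y)) (sq_nonneg c)]
  have hden : 1 + b * (c * tMap b y) ^ 2 = (1 + b * y ^ 2 * (c ^ 2 - 1)) / (1 - b * y ^ 2) := by
    rw [tMap, mul_pow, div_pow, sq_sqrt hs.le]
    field_simp
    ring
  rw [tMapInv, hden, sqrt_div hD, tMap, div_div_eq_mul_div, mul_assoc,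
    div_mul_cancel₀ _ (sqrt_pos.mpr hs).ne']

/-- If `Φ₀` maps the open interval `I = (-1/√(12π), 1/√(12π))` to itself and
satisfies `T(Φ₀(φ₀)) = ε a⁻¹ T(φ₀)` where `T(y) = y/√(1 - 12π y²)`, then
`Φ₀(φ₀) = ε a⁻¹ φ₀ (1 + 12π φ₀² (a⁻² - 1))^{-1/2}` and `Φ₀` is a bijection of
`I` onto itself. -/
theorem stmt_14 (a ε : ℝ) (ha : a ≠ 0) (hε : ε = 1 ∨ ε = -1) (Φ₀ : ℝ → ℝ)
    (hmaps : ∀ φ₀ ∈ Set.Ioo (-(1 / Real.sqrt (12 * Real.pi))) (1 / Real.sqrt (12 * Real.pi)),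
      Φ₀ φ₀ ∈ Set.Ioo (-(1 / Real.sqrt (12 * Real.pi))) (1 / Real.sqrt (12 * Real.pi)))
    (hT : ∀ φ₀ ∈ Set.Ioo (-(1 / Real.sqrt (12 * Real.pi))) (1 / Real.sqrt (12 * Real.pi)),
      Φ₀ φ₀ / Real.sqrt (1 - 12 * Real.pi * (Φ₀ φ₀) ^ 2) =
        ε * a⁻¹ * (φ₀ / Real.sqrt (1 - 12 * Real.pi * φ₀ ^ 2))) :
    (∀ φ₀ ∈ Set.Ioo (-(1 / Real.sqrt (12 * Real.pi))) (1 / Real.sqrt (12 * Real.pi)),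
      Φ₀ φ₀ = ε * a⁻¹ * φ₀ / Real.sqrt (1 + 12 * Real.pi * φ₀ ^ 2 * (a⁻¹ ^ 2 - 1))) ∧
    Set.BijOn Φ₀
      (Set.Ioo (-(1 / Real.sqrt (12 * Real.pi))) (1 / Real.sqrt (12 * Real.pi)))
      (Set.Ioo (-(1 / Real.sqrt (12 * Real.pi))) (1 / Real.sqrt (12 * Real.pi))) := by
  have hb : 0 < 12 * π := by positivity
  set c := ε * a⁻¹
  have hc : c ≠ 0 := mul_ne_zero (by rcases hε with rfl | rfl <;> norm_num) (inv_ne_zero ha)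
  have hc_sq : c ^ 2 = a⁻¹ ^ 2 := by rcases hε with rfl | rfl <;> ring
  have hΦ₀ : EqOn Φ₀ (tMapInv (12 * π) ∘ (c * ·) ∘ tMap (12 * π)) (tDomain (12 * π)) :=
    fun φ₀ hφ₀ ↦ by
      rw [← tMapInv_tMap ((mem_tDomain_iff hb).mp (hmaps φ₀ hφ₀))]
      exact congrArg _ (hT φ₀ hφ₀)
  refine ⟨fun φ₀ hφ₀ ↦ ?_, ?_⟩
  · rw [hΦ₀ hφ₀, Function.comp_apply, Function.comp_apply,
      tMapInv_mul_tMap hb.le c ((mem_tDomain_iff hb).mp hφ₀), hc_sq]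
  · have hmul : BijOn (c * ·) univ univ := bijOn_univ.mpr (Equiv.mulLeft₀ c hc).bijective
    exact ((bijOn_tMapInv hb).comp (hmul.comp (bijOn_tMap hb))).congr hΦ₀.symm
end

section
/- Let $g = \operatorname{diag}(\pm e^{h_1}, e^{h_2}, e^{h_3})$ with $h_a(x) = \lambda(|x|^2)(k_{a+1} - k_{a-1})$ (indices mod 3) for a smooth radial profile $\lambda$, and let $K = \operatorname{diag}(k_1, k_2, k_3)$ be constant. Then $\nabla_a K^a_b = 0$ for all $b$, and $\nabla_a (\mathring{K}^2)^a_b = x_b\, \lambda'(|x|^2)\, (k_1 - k_2)(k_2 - k_3)(k_3 - k_1)$, where $\mathring{K} = K - \frac{1}{3}\mathbb{1}$. In particular, if the $k_a$ are pairwise distinct and $\lambda'(|x|^2) \ne 0$ with $x \ne 0$, then $\nabla_a(\mathring{K}^2)^a_b \ne 0$. -/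
noncomputable section

/-- Partial derivative in the `i`-th coordinate direction on `ℝ³`. -/
noncomputable def pd (i : Fin 3) (f : (Fin 3 → ℝ) → ℝ) (x : Fin 3 → ℝ) : ℝ :=
  fderiv ℝ f x (Pi.single i 1)

/-- Christoffel symbols `Γ^c_{ab}` of the Levi-Civita connection of a metric
`g` in coordinates. -/
noncomputable def Christoffel (g : (Fin 3 → ℝ) → Matrix (Fin 3) (Fin 3) ℝ)
    (x : Fin 3 → ℝ) (c a b : Fin 3) : ℝ :=
  (1 / 2) * ∑ d : Fin 3, (g x)⁻¹ c d *
    (pd a (fun y => g y b d) x + pd b (fun y => g y a d) x - pd d (fun y => g y a b) x)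

/-- Covariant divergence `∇_a K^a_b` of a `(1,1)`-tensor field `K`. -/
noncomputable def tensorDiv (g K : (Fin 3 → ℝ) → Matrix (Fin 3) (Fin 3) ℝ)
    (x : Fin 3 → ℝ) (b : Fin 3) : ℝ :=
  (∑ a : Fin 3, pd a (fun y => K y a b) x)
    + ∑ a : Fin 3, ∑ c : Fin 3, Christoffel g x a a c * K x c b
    - ∑ a : Fin 3, ∑ c : Fin 3, Christoffel g x c a b * K x a c

lemma pd_const (a : Fin 3) (r : ℝ) (x : Fin 3 → ℝ) : pd a (fun _ => r) x = 0 := by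
  simp [pd]

lemma hasFDerivAt_sumSq (x : Fin 3 → ℝ) :
    HasFDerivAt (fun y : Fin 3 → ℝ => ∑ j, y j ^ 2)
      (∑ j, (2 * x j) • ContinuousLinearMap.proj (R := ℝ) (φ := fun _ : Fin 3 => ℝ) j) x := by
  have h : ∀ j : Fin 3, HasFDerivAt (fun y : Fin 3 → ℝ => y j ^ 2)
      ((2 * x j) • ContinuousLinearMap.proj (R := ℝ) (φ := fun _ : Fin 3 => ℝ) j) x := by
    intro j
    have h1 := (ContinuousLinearMap.proj (R := ℝ) (φ := fun _ : Fin 3 => ℝ) j).hasFDerivAt (x := x)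
    have h2 := h1.mul h1
    simp only [ContinuousLinearMap.proj_apply] at h2
    have h3 : HasFDerivAt (fun y : Fin 3 → ℝ => y j * y j)
        ((2 * x j) • ContinuousLinearMap.proj (R := ℝ) (φ := fun _ : Fin 3 => ℝ) j) x := by
      refine HasFDerivAt.congr_fderiv h2 ?_
      rw [two_mul, add_smul]
    simpa [pow_two] using h3
  exact HasFDerivAt.fun_sum (fun j _ => h j)

lemma pd_exp (lam : ℝ → ℝ) (hlam : ContDiff ℝ (⊤ : ℕ∞) lam) (σ c : ℝ) (x : Fin 3 → ℝ) (a : Fin 3) :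
    pd a (fun y => σ * Real.exp (lam (∑ j, y j ^ 2) * c)) x
      = σ * Real.exp (lam (∑ j, x j ^ 2) * c) * (deriv lam (∑ j, x j ^ 2) * c * (2 * x a)) := by
  have h1 := hasFDerivAt_sumSq x
  have h2 : HasDerivAt lam (deriv lam (∑ j, x j ^ 2)) (∑ j, x j ^ 2) :=
    ((hlam.differentiable (by simp)) (∑ j, x j ^ 2)).hasDerivAt
  have h3 := h2.comp_hasFDerivAt x h1
  have h4 := h3.mul_const c
  have h5 := h4.exp
  have h6 := h5.const_mul σ
  simp only [Function.comp] at h6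
  rw [pd, h6.fderiv]
  simp [ContinuousLinearMap.smul_apply, ContinuousLinearMap.sum_apply, Pi.single_apply,
    Finset.mul_sum, Finset.sum_ite_eq']
  ring

set_option maxHeartbeats 1000000 in
lemma tensorDiv_diag (ε : ℝ) (hε : ε ≠ 0) (k m : Fin 3 → ℝ)
    (lam : ℝ → ℝ) (hlam : ContDiff ℝ (⊤ : ℕ∞) lam) (x : Fin 3 → ℝ) (b : Fin 3) :
    tensorDiv
      (fun y => Matrix.diagonal fun i =>
        (if i = 0 then ε else 1) *
          Real.exp (lam (∑ j : Fin 3, y j ^ 2) * (k (i + 1) - k (i - 1))))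
      (fun _ => Matrix.diagonal m) x b
      = - (x b * deriv lam (∑ j : Fin 3, x j ^ 2) *
          ((k 1 - k 2) * m 0 + (k 2 - k 0) * m 1 + (k 0 - k 1) * m 2)) := by
  have hσ : ∀ i : Fin 3, (if i = 0 then ε else 1) ≠ 0 := by
    intro i; split <;> simp [hε]
  have hv : ∀ i : Fin 3,
      (if i = 0 then ε else 1) *
        Real.exp (lam (∑ j : Fin 3, x j ^ 2) * (k (i + 1) - k (i - 1))) ≠ 0 :=
    fun i => mul_ne_zero (hσ i) (Real.exp_ne_zero _)
  have hpd : ∀ a b' d' : Fin 3,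
      pd a (fun y => Matrix.diagonal (fun i =>
        (if i = 0 then ε else 1) *
          Real.exp (lam (∑ j : Fin 3, y j ^ 2) * (k (i + 1) - k (i - 1)))) b' d') x
      = if b' = d' then
          (if b' = 0 then ε else 1) *
            Real.exp (lam (∑ j : Fin 3, x j ^ 2) * (k (b' + 1) - k (b' - 1))) *
            (deriv lam (∑ j : Fin 3, x j ^ 2) * (k (b' + 1) - k (b' - 1)) * (2 * x a))
        else 0 := by
    intro a b' d'
    by_cases h : b' = d'
    · subst h
      simp only [Matrix.diagonal_apply_eq, if_pos rfl]
      exact pd_exp lam hlam _ _ x a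
    · simp only [Matrix.diagonal_apply_ne _ h, if_neg h]
      exact pd_const a 0 x
  have hinv : (Matrix.diagonal fun i =>
        (if i = 0 then ε else 1) *
          Real.exp (lam (∑ j : Fin 3, x j ^ 2) * (k (i + 1) - k (i - 1))))⁻¹
      = Matrix.diagonal (fun i =>
        ((if i = 0 then ε else 1) *
          Real.exp (lam (∑ j : Fin 3, x j ^ 2) * (k (i + 1) - k (i - 1))))⁻¹) := by
    refine Matrix.inv_eq_right_inv ?_
    rw [Matrix.diagonal_mul_diagonal]
    ext i j
    by_cases h : i = j
    · subst h
      simp only [Matrix.diagonal_apply_eq, Pi.mul_apply, Matrix.one_apply_eq]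
      exact mul_inv_cancel₀ (hv i)
    · simp [Matrix.diagonal_apply_ne _ h, Matrix.one_apply_ne h]
  have e01 : (0 : Fin 3) + 1 = 1 := rfl
  have e11 : (1 : Fin 3) + 1 = 2 := rfl
  have e21 : (2 : Fin 3) + 1 = 0 := rfl
  have s01 : (0 : Fin 3) - 1 = 2 := rfl
  have s11 : (1 : Fin 3) - 1 = 0 := rfl
  have s21 : (2 : Fin 3) - 1 = 1 := rfl
  have nm1 : (-1 : Fin 3) = 2 := by decide
  have c00 : ((0:Fin 3) = 0) = True := by simp
  have c11 : ((1:Fin 3) = 1) = True := by simp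
  have c22 : ((2:Fin 3) = 2) = True := by simp
  have c01 : ((0:Fin 3) = 1) = False := by simp
  have c02 : ((0:Fin 3) = 2) = False := by simp
  have c10 : ((1:Fin 3) = 0) = False := by simp
  have c12 : ((1:Fin 3) = 2) = False := by simp
  have c20 : ((2:Fin 3) = 0) = False := by simp
  have c21 : ((2:Fin 3) = 1) = False := by simp
  have htri : ∀ i : Fin 3, i = 0 ∨ i = 1 ∨ i = 2 := by decide
  have hGam : ∀ a b' : Fin 3,
      Christoffel (fun y => Matrix.diagonal fun i =>
        (if i = 0 then ε else 1) *
          Real.exp (lam (∑ j : Fin 3, y j ^ 2) * (k (i + 1) - k (i - 1)))) x a a b'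
      = deriv lam (∑ j : Fin 3, x j ^ 2) * (k (a + 1) - k (a - 1)) * x b' := by
    intro a b'
    rcases htri a with ha|ha|ha <;> rcases htri b' with hb|hb|hb <;> subst ha <;> subst hb <;>
    · simp only [Christoffel, hpd, hinv]
      simp only [Fin.sum_univ_three, Matrix.diagonal_apply, e01, e11, e21, s01, s11, s21,
        nm1, c00, c11, c22, c01, c02, c10, c12, c20, c21, if_true, if_false]
      field_simp
      ring
  simp only [Fin.sum_univ_three] at hGam
  rcases htri b with hb|hb|hb <;> subst hb <;>
  · simp only [tensorDiv, Fin.sum_univ_three, hGam, Matrix.diagonal_apply, pd_const,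
      e01, e11, e21, s01, s11, s21, nm1, c00, c11, c22, c01, c02, c10, c12, c20, c21,
      if_true, if_false, mul_zero, zero_mul, add_zero, zero_add]
    ring

/-- For the diagonal metric `g = diag(± e^{h₁}, e^{h₂}, e^{h₃})` with
`h_a(x) = λ(|x|²)(k_{a+1} - k_{a-1})` (indices mod 3) and constant
`K = diag(k₁,k₂,k₃)`: `∇_a K^a_b = 0` and
`∇_a (K̊²)^a_b = x_b λ'(|x|²) (k₁-k₂)(k₂-k₃)(k₃-k₁)`; in particular the latter
is a nonzero covector when the `k_a` are pairwise distinct, `λ'(|x|²) ≠ 0`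
and `x ≠ 0`. -/
theorem stmt_16 (ε : ℝ) (hε : ε = 1 ∨ ε = -1) (k : Fin 3 → ℝ)
    (lam : ℝ → ℝ) (hlam : ContDiff ℝ (⊤ : ℕ∞) lam) :
    ∀ (x : Fin 3 → ℝ) (b : Fin 3),
      tensorDiv
        (fun y => Matrix.diagonal fun i =>
          (if i = 0 then ε else 1) *
            Real.exp (lam (∑ j : Fin 3, y j ^ 2) * (k (i + 1) - k (i - 1))))
        (fun _ => Matrix.diagonal k) x b = 0 ∧
      tensorDiv
        (fun y => Matrix.diagonal fun i =>
          (if i = 0 then ε else 1) *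
            Real.exp (lam (∑ j : Fin 3, y j ^ 2) * (k (i + 1) - k (i - 1))))
        (fun _ => Matrix.diagonal fun a => (k a - 1 / 3) ^ 2) x b
        = x b * deriv lam (∑ j : Fin 3, x j ^ 2) *
            ((k 0 - k 1) * (k 1 - k 2) * (k 2 - k 0)) ∧
      ((k 0 ≠ k 1 ∧ k 1 ≠ k 2 ∧ k 2 ≠ k 0) →
        deriv lam (∑ j : Fin 3, x j ^ 2) ≠ 0 → x ≠ 0 →
        ∃ b' : Fin 3,
          tensorDiv
            (fun y => Matrix.diagonal fun i =>
              (if i = 0 then ε else 1) *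
                Real.exp (lam (∑ j : Fin 3, y j ^ 2) * (k (i + 1) - k (i - 1))))
            (fun _ => Matrix.diagonal fun a => (k a - 1 / 3) ^ 2) x b' ≠ 0) := by
  have hε0 : ε ≠ 0 := by rcases hε with h | h <;> rw [h] <;> norm_num
  intro x b
  refine ⟨?_, ?_, ?_⟩
  · rw [tensorDiv_diag ε hε0 k k lam hlam x b]; ring
  · rw [tensorDiv_diag ε hε0 k (fun a => (k a - 1 / 3) ^ 2) lam hlam x b]; ring
  · rintro ⟨h01, h12, h20⟩ hd hx
    obtain ⟨b', hb'⟩ := Function.ne_iff.mp hx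
    refine ⟨b', ?_⟩
    rw [tensorDiv_diag ε hε0 k (fun a => (k a - 1 / 3) ^ 2) lam hlam x b']
    have hS : ((k 1 - k 2) * (fun a => (k a - 1 / 3) ^ 2) 0 +
        (k 2 - k 0) * (fun a => (k a - 1 / 3) ^ 2) 1 +
        (k 0 - k 1) * (fun a => (k a - 1 / 3) ^ 2) 2)
        = -((k 0 - k 1) * ((k 1 - k 2) * (k 2 - k 0))) := by ring
    rw [hS]
    have hb0 : x b' ≠ 0 := by simpa using hb'
    have hP : (k 0 - k 1) * ((k 1 - k 2) * (k 2 - k 0)) ≠ 0 :=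
      mul_ne_zero (sub_ne_zero_of_ne h01)
        (mul_ne_zero (sub_ne_zero_of_ne h12) (sub_ne_zero_of_ne h20))
    simpa using mul_ne_zero (mul_ne_zero hb0 hd) hP


end
end
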